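/- arXiv:1807.04791 — 2 statements merged into one kernel-verified Lean document; each statement's English description precedes it below -/
import Mathlib

section
/- Let (A, m) be a local ring, J and J' nonzero proper ideals of B and C respectively with J × J' ⊆ Jac(B × C). If the bi-amalgamation A ⋈^{f,g} (J, J') is Gaussian, then the subrings f(A)+J of B and g(A)+J' of C are Gaussian. -/
/-- The content ideal of a polynomial: the ideal generated by its coefficients. -/
noncomputable def contentIdeal {R : Type*} [CommRing R] (p : Polynomial R) : Ideal R :=
  Ideal.span (Set.range p.coeff)

/-- A commutative ring is Gaussian if `c(pq) = c(p)c(q)` for all polynomials. -/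
def IsGaussianRing (R : Type*) [CommRing R] : Prop :=
  ∀ p q : Polynomial R, contentIdeal (p * q) = contentIdeal p * contentIdeal q

/- The bi-amalgamation maps onto `f(A) + J` and onto `g(A) + J'` by the two projections of
`B × C`, and the Gaussian property passes to homomorphic images because the content ideal
commutes with base change: `c(φ p) = φ(c(p))`. -/

section Gaussian

variable {R S : Type*} [CommRing R] [CommRing S]

lemma contentIdeal_map (φ : R →+* S) (p : Polynomial R) :
    contentIdeal (p.map φ) = (contentIdeal p).map φ := by
  have hcoeff : (p.map φ).coeff = φ ∘ p.coeff := funext fun n => Polynomial.coeff_map φ n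
  rw [contentIdeal, contentIdeal, Ideal.map_span, hcoeff, Set.range_comp]

lemma IsGaussianRing.of_surjective (hR : IsGaussianRing R) (φ : R →+* S)
    (hφ : Function.Surjective φ) : IsGaussianRing S := by
  intro P Q
  obtain ⟨p, rfl⟩ := Polynomial.map_surjective φ hφ P
  obtain ⟨q, rfl⟩ := Polynomial.map_surjective φ hφ Q
  rw [← Polynomial.map_mul, contentIdeal_map, contentIdeal_map, contentIdeal_map, hR p q,
    Ideal.map_mul]

lemma IsGaussianRing.of_image_eq {R₀ : Subring R} {S₀ : Subring S} (hR₀ : IsGaussianRing R₀)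
    (φ : R →+* S) (himage : φ '' R₀ = S₀) : IsGaussianRing S₀ := by
  have hrange : S₀ = (φ.comp R₀.subtype).range := by
    refine SetLike.ext' ?_
    rw [← himage, RingHom.coe_range, RingHom.coe_comp, Set.range_comp, Subring.coe_subtype,
      Subtype.range_coe]
  subst hrange
  exact hR₀.of_surjective _ (φ.comp R₀.subtype).rangeRestrict_surjective

end Gaussian

section BiAmalgamation

variable {A B C : Type*} [CommRing A] [CommRing B] [CommRing C]
  (f : A →+* B) (g : A →+* C) (J : Ideal B) (J' : Ideal C)

lemma fst_image_biAmalgamation :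
    Prod.fst '' {x : B × C | ∃ a : A, ∃ j ∈ J, ∃ j' ∈ J', x = (f a + j, g a + j')} =
      {b | ∃ a : A, ∃ j ∈ J, b = f a + j} := by
  ext b
  constructor
  · rintro ⟨_, ⟨a, j, hj, j', -, rfl⟩, rfl⟩
    exact ⟨a, j, hj, rfl⟩
  · rintro ⟨a, j, hj, rfl⟩
    exact ⟨_, ⟨a, j, hj, 0, J'.zero_mem, rfl⟩, rfl⟩

lemma snd_image_biAmalgamation :
    Prod.snd '' {x : B × C | ∃ a : A, ∃ j ∈ J, ∃ j' ∈ J', x = (f a + j, g a + j')} =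
      {c | ∃ a : A, ∃ j' ∈ J', c = g a + j'} := by
  ext c
  constructor
  · rintro ⟨_, ⟨a, j, -, j', hj', rfl⟩, rfl⟩
    exact ⟨a, j', hj', rfl⟩
  · rintro ⟨a, j', hj', rfl⟩
    exact ⟨_, ⟨a, 0, J.zero_mem, j', hj', rfl⟩, rfl⟩

end BiAmalgamation

theorem biAmalgamation_gaussian_imp_subrings_gaussian_general
    {A B C : Type*} [CommRing A] [CommRing B] [CommRing C]
    (f : A →+* B) (g : A →+* C) (J : Ideal B) (J' : Ideal C) :
    ∀ S : Subring (B × C),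
      (S : Set (B × C)) =
        {x | ∃ a : A, ∃ j ∈ J, ∃ j' ∈ J', x = (f a + j, g a + j')} →
      IsGaussianRing S →
      (∀ T₁ : Subring B, (T₁ : Set B) = {b | ∃ a : A, ∃ j ∈ J, b = f a + j} →
          IsGaussianRing T₁) ∧
      (∀ T₂ : Subring C, (T₂ : Set C) = {c | ∃ a : A, ∃ j' ∈ J', c = g a + j'} →
          IsGaussianRing T₂) := by
  intro S hS hSGauss
  refine ⟨fun T₁ hT₁ => hSGauss.of_image_eq (RingHom.fst B C) ?_,
    fun T₂ hT₂ => hSGauss.of_image_eq (RingHom.snd B C) ?_⟩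
  · rw [hS, hT₁]
    exact fst_image_biAmalgamation f g J J'
  · rw [hS, hT₂]
    exact snd_image_biAmalgamation f g J J'

/-- if `(A,m)` is local, `J, J'` nonzero proper with `J × J' ⊆ Jac(B × C)`,
and the bi-amalgamation is Gaussian, then `f(A)+J` and `g(A)+J'` are Gaussian. -/
theorem biAmalgamation_gaussian_imp_subrings_gaussian
    {A B C : Type*} [CommRing A] [CommRing B] [CommRing C] [IsLocalRing A]
    (f : A →+* B) (g : A →+* C) (J : Ideal B) (J' : Ideal C)
    (hcomap : J.comap f = J'.comap g)
    (hJ0 : J ≠ ⊥) (hJt : J ≠ ⊤) (hJ'0 : J' ≠ ⊥) (hJ't : J' ≠ ⊤)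
    (hJac : J.prod J' ≤ (⊥ : Ideal (B × C)).jacobson) :
    ∀ S : Subring (B × C),
      (S : Set (B × C)) =
        {x | ∃ a : A, ∃ j ∈ J, ∃ j' ∈ J', x = (f a + j, g a + j')} →
      IsGaussianRing S →
      (∀ T₁ : Subring B, (T₁ : Set B) = {b | ∃ a : A, ∃ j ∈ J, b = f a + j} →
          IsGaussianRing T₁) ∧
      (∀ T₂ : Subring C, (T₂ : Set C) = {c | ∃ a : A, ∃ j' ∈ J', c = g a + j'} →
          IsGaussianRing T₂) :=
  biAmalgamation_gaussian_imp_subrings_gaussian_general f g J J'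
end

section
/- Let (A, m) be a local ring with A Gaussian, J² = 0, J'² = 0, J, J' nonzero proper ideals with J × J' ⊆ Jac(B × C), and I₀ := f⁻¹(J) = g⁻¹(J') a prime ideal of A. If the bi-amalgamation A ⋈^{f,g} (J, J') is Gaussian, then for every a ∈ m, f(a)J = f(a)²J and g(a)J' = g(a)²J'. -/
/-!
Write `x = (f a, g a)`. For `j ∈ J`, the element `y = (j, 0)` of the bi-amalgamation squares to
zero, and in a Gaussian ring `c((x + yX)(x - yX)) = c(x²) = (x²)` contains `xy`, so
`f(a) j = f(a)² (f(b) + k)` for some `b ∈ A`, `k ∈ J`. Then `f(a²b) ∈ J`, so by primality of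
`f⁻¹(J)` either `f(a) ∈ J`, whence `f(a) j ∈ J² = 0`, or `f(b) + k ∈ J`. The same argument on the
second coordinate gives the statement for `g` and `J'`.
-/

open scoped Polynomial
open Polynomial (C X)

theorem contentIdeal_eq_polynomial_contentIdeal {R : Type*} [CommRing R] (p : R[X]) :
    contentIdeal p = p.contentIdeal := by
  refine le_antisymm (Ideal.span_le.mpr (Set.range_subset_iff.mpr p.coeff_mem_contentIdeal))
    (Ideal.span_mono fun c hc => ?_)
  obtain ⟨n, -, rfl⟩ := Polynomial.mem_coeffs_iff.mp hc
  exact ⟨n, rfl⟩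

theorem IsGaussianRing.contentIdeal_mul {R : Type*} [CommRing R] (hR : IsGaussianRing R)
    (p q : R[X]) : (p * q).contentIdeal = p.contentIdeal * q.contentIdeal := by
  simpa only [contentIdeal_eq_polynomial_contentIdeal] using hR p q

theorem IsGaussianRing.mul_mem_span_sq_of_mul_self_eq_zero {R : Type*} [CommRing R]
    (hR : IsGaussianRing R) (x : R) {y : R} (hy : y * y = 0) : x * y ∈ Ideal.span {x ^ 2} := by
  have hprod : (C x + C y * X) * (C x - C y * X) = C (x ^ 2) := by
    have hCy : (C y : R[X]) * C y = 0 := by rw [← Polynomial.C_mul, hy, Polynomial.C_0]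
    linear_combination (-X ^ 2 : R[X]) * hCy - (Polynomial.C_pow : C (x ^ 2) = C x ^ 2)
  have hx : x ∈ (C x + C y * X).contentIdeal := by
    convert (C x + C y * X).coeff_mem_contentIdeal 0; simp
  have hy' : -y ∈ (C x - C y * X).contentIdeal := by
    convert (C x - C y * X).coeff_mem_contentIdeal 1; simp
  have hmem := Ideal.mul_mem_mul hx hy'
  rw [← hR.contentIdeal_mul, hprod, Polynomial.contentIdeal_C] at hmem
  simpa using neg_mem hmem

theorem Ideal.mul_eq_zero_of_mul_self_eq_bot {R : Type*} [CommRing R] {I : Ideal R}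
    (hI : I * I = ⊥) {r s : R} (hr : r ∈ I) (hs : s ∈ I) : r * s = 0 := by
  simpa [hI] using Ideal.mul_mem_mul hr hs

section Component

variable {A B : Type*} [CommRing A] [CommRing B] {f : A →+* B} {J : Ideal B}

theorem mul_mem_span_sq_mul_of_mul_eq_sq_mul (hJ2 : J * J = ⊥) (hprime : (J.comap f).IsPrime)
    {a b : A} {c j : B} (hj : j ∈ J) (hc : c - f b ∈ J) (h : f a * j = f a ^ 2 * c) :
    f a * j ∈ Ideal.span {f a ^ 2} * J := by
  have hab : a ^ 2 * b ∈ J.comap f := by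
    have hfab : f (a ^ 2 * b) = f a * j - f a ^ 2 * (c - f b) := by rw [map_mul, map_pow, h]; ring
    rw [Ideal.mem_comap, hfab]
    exact J.sub_mem (J.mul_mem_left _ hj) (J.mul_mem_left _ hc)
  rcases hprime.mem_or_mem hab with ha | hb
  · rw [Ideal.mul_eq_zero_of_mul_self_eq_bot hJ2 (hprime.mem_of_pow_mem 2 ha) hj]
    exact zero_mem _
  · have hcJ : c ∈ J := by simpa using J.add_mem hc hb
    exact Ideal.mem_span_singleton_mul.mpr ⟨c, hcJ, h.symm⟩

theorem span_singleton_mul_eq_span_sq_mul_of_isGaussianRing {R : Type*} [CommRing R]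
    (hR : IsGaussianRing R) (π : R →+* B) (hJ2 : J * J = ⊥) (hprime : (J.comap f).IsPrime)
    (hπ : ∀ r, ∃ b, π r - f b ∈ J) (hlift : ∀ j ∈ J, ∃ y, y * y = 0 ∧ π y = j)
    {x : R} {a : A} (hx : π x = f a) :
    Ideal.span {f a} * J = Ideal.span {f a ^ 2} * J := by
  refine le_antisymm (Ideal.span_singleton_mul_le_iff.mpr fun j hj => ?_)
    (Ideal.mul_mono_left (Ideal.span_singleton_le_span_singleton.mpr (dvd_pow_self _ two_ne_zero)))
  obtain ⟨y, hyy, rfl⟩ := hlift j hj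
  obtain ⟨s, hs⟩ := Ideal.mem_span_singleton'.mp (hR.mul_mem_span_sq_of_mul_self_eq_zero x hyy)
  obtain ⟨b, hb⟩ := hπ s
  refine mul_mem_span_sq_mul_of_mul_eq_sq_mul hJ2 hprime hj hb ?_
  rw [← hx, ← map_mul, ← hs, map_mul, map_pow, mul_comm (π s)]

end Component

theorem biAmalgamation_gaussian_imp_multiplication_condition_general
    {A B C : Type*} [CommRing A] [CommRing B] [CommRing C] [IsLocalRing A]
    (f : A →+* B) (g : A →+* C) (J : Ideal B) (J' : Ideal C)
    (hcomap : J.comap f = J'.comap g)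
    (hJ2 : J * J = ⊥) (hJ'2 : J' * J' = ⊥)
    (hI₀ : (J.comap f).IsPrime) :
    ∀ S : Subring (B × C),
      (S : Set (B × C)) =
        {x | ∃ a : A, ∃ j ∈ J, ∃ j' ∈ J', x = (f a + j, g a + j')} →
      IsGaussianRing S →
      ∀ a ∈ IsLocalRing.maximalIdeal A,
        Ideal.span {f a} * J = Ideal.span {f a ^ 2} * J ∧
        Ideal.span {g a} * J' = Ideal.span {g a ^ 2} * J' := by
  intro S hS hSG a _
  have hmem : ∀ a j j', j ∈ J → j' ∈ J' → (f a + j, g a + j') ∈ S := fun a j j' hj hj' => by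
    rw [← SetLike.mem_coe, hS]
    exact ⟨a, j, hj, j', hj', rfl⟩
  have hform : ∀ s : S, ∃ b, ∃ k ∈ J, ∃ k' ∈ J', (s : B × C) = (f b + k, g b + k') := fun s => by
    have hs := s.prop
    rwa [← SetLike.mem_coe, hS] at hs
  let x : S := ⟨(f a, g a), by simpa using hmem a 0 0 J.zero_mem J'.zero_mem⟩
  constructor
  · refine span_singleton_mul_eq_span_sq_mul_of_isGaussianRing hSG
      ((RingHom.fst B C).comp S.subtype) hJ2 hI₀ (fun s => ?_) (fun j hj => ?_) (x := x) rfl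
    · obtain ⟨b, k, hk, _, _, hs⟩ := hform s
      exact ⟨b, by simpa [hs] using hk⟩
    · refine ⟨⟨(j, 0), by simpa using hmem 0 j 0 hj J'.zero_mem⟩, ?_, rfl⟩
      ext <;> simp [Ideal.mul_eq_zero_of_mul_self_eq_bot hJ2 hj hj]
  · refine span_singleton_mul_eq_span_sq_mul_of_isGaussianRing hSG
      ((RingHom.snd B C).comp S.subtype) hJ'2 (hcomap ▸ hI₀) (fun s => ?_) (fun j' hj' => ?_)
      (x := x) rfl
    · obtain ⟨b, _, _, k', hk', hs⟩ := hform s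
      exact ⟨b, by simpa [hs] using hk'⟩
    · refine ⟨⟨(0, j'), by simpa using hmem 0 0 j' J.zero_mem hj'⟩, ?_, rfl⟩
      ext <;> simp [Ideal.mul_eq_zero_of_mul_self_eq_bot hJ'2 hj' hj']

/-- if `(A,m)` is local with `A` Gaussian, `J² = 0`, `J'² = 0`, `J, J'`
nonzero proper with `J × J' ⊆ Jac(B × C)` and `I₀ = f⁻¹(J) = g⁻¹(J')` prime, and the
bi-amalgamation is Gaussian, then `f(a)J = f(a)²J` and `g(a)J' = g(a)²J'` for all `a ∈ m`. -/
theorem biAmalgamation_gaussian_imp_multiplication_condition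
    {A B C : Type*} [CommRing A] [CommRing B] [CommRing C] [IsLocalRing A]
    (f : A →+* B) (g : A →+* C) (J : Ideal B) (J' : Ideal C)
    (hcomap : J.comap f = J'.comap g)
    (hA : IsGaussianRing A)
    (hJ2 : J * J = ⊥) (hJ'2 : J' * J' = ⊥)
    (hJ0 : J ≠ ⊥) (hJt : J ≠ ⊤) (hJ'0 : J' ≠ ⊥) (hJ't : J' ≠ ⊤)
    (hJac : J.prod J' ≤ (⊥ : Ideal (B × C)).jacobson)
    (hI₀ : (J.comap f).IsPrime) :
    ∀ S : Subring (B × C),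
      (S : Set (B × C)) =
        {x | ∃ a : A, ∃ j ∈ J, ∃ j' ∈ J', x = (f a + j, g a + j')} →
      IsGaussianRing S →
      ∀ a ∈ IsLocalRing.maximalIdeal A,
        Ideal.span {f a} * J = Ideal.span {f a ^ 2} * J ∧
        Ideal.span {g a} * J' = Ideal.span {g a ^ 2} * J' :=
  biAmalgamation_gaussian_imp_multiplication_condition_general f g J J' hcomap hJ2 hJ'2 hI₀
end
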